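/- arXiv:1112.1529 — 4 statements merged into one kernel-verified Lean document; each statement's English description precedes it below -/
import Mathlib

section
/- Let Ω be a finite sample space and P_1, …, P_r probability distributions on Ω. Let φ : Ω → {1, …, r} be any maximum-likelihood decision rule, i.e. for every ω ∈ Ω, P_{φ(ω)}(ω) = max_{1 ≤ k ≤ r} P_k(ω). Then the average error probability satisfies (1/r) Σ_{i=1}^r P_i({ω : φ(ω) ≠ i}) ≤ (1/r) Σ_{i≠j} inf_{s∈[0,1]} Σ_{ω∈Ω} P_i(ω)^{1−s} P_j(ω)^s. -/
noncomputable section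

/-- The classical affinity `inf_{s∈[0,1]} Σ_ω P(ω)^{1-s} Q(ω)^s`
(real powers, with the `Real.rpow` convention `0^0 = 1`). -/
def clAffinity {Ω : Type*} [Fintype Ω] (P Q : Ω → ℝ) : ℝ :=
  sInf ((fun s : ℝ => ∑ ω, P ω ^ (1 - s) * Q ω ^ s) '' Set.Icc 0 1)

end

private lemma rpow_pt {a b : ℝ} (ha : 0 ≤ a) (hb : 0 ≤ b) (hab : a ≤ b)
    {s : ℝ} (hs : s ∈ Set.Icc (0:ℝ) 1) : a ≤ a ^ (1 - s) * b ^ s := by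
  rcases eq_or_lt_of_le ha with h | h
  · have : (0:ℝ) ≤ a ^ (1 - s) * b ^ s := by positivity
    linarith [this, h]
  · have h1 : a = a ^ (1 - s) * a ^ s := by
      rw [← Real.rpow_add h]
      simp
    nth_rewrite 1 [h1]
    exact mul_le_mul_of_nonneg_left (Real.rpow_le_rpow ha hab hs.1)
      (Real.rpow_nonneg ha _)

/-- any maximum-likelihood decision rule between `r`
probability distributions on a finite sample space has average error at most
`(1/r) Σ_{i≠j} inf_{s∈[0,1]} Σ_ω P_i(ω)^{1-s} P_j(ω)^s`. -/
theorem ml_rule_error_bound {Ω : Type*} [Fintype Ω] {r : ℕ}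
    (P : Fin r → Ω → ℝ)
    (hP0 : ∀ i ω, 0 ≤ P i ω) (hP1 : ∀ i, ∑ ω, P i ω = 1)
    (φ : Ω → Fin r)
    (hML : ∀ ω k, P k ω ≤ P (φ ω) ω) :
    (1 / (r : ℝ)) * ∑ i, ∑ ω ∈ Finset.univ.filter (fun ω => φ ω ≠ i), P i ω ≤
      (1 / (r : ℝ)) *
        ∑ i, ∑ j, (if i = j then 0 else clAffinity (P i) (P j)) := by
  classical
  apply mul_le_mul_of_nonneg_left _ (by positivity)
  -- fiber bound
  have hfib : ∀ i j : Fin r,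
      ∑ ω ∈ Finset.univ.filter (fun ω => φ ω = j), P i ω ≤ clAffinity (P i) (P j) := by
    intro i j
    apply le_csInf ⟨_, Set.mem_image_of_mem _ (Set.mem_Icc.2 ⟨le_refl (0:ℝ), zero_le_one⟩)⟩
    rintro x ⟨s, hs, rfl⟩
    calc ∑ ω ∈ Finset.univ.filter (fun ω => φ ω = j), P i ω
        ≤ ∑ ω ∈ Finset.univ.filter (fun ω => φ ω = j), P i ω ^ (1 - s) * P j ω ^ s := by
          apply Finset.sum_le_sum
          intro ω hω
          have hφ : φ ω = j := (Finset.mem_filter.mp hω).2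
          exact rpow_pt (hP0 i ω) (hP0 j ω) (hφ ▸ hML ω i) hs
      _ ≤ ∑ ω, P i ω ^ (1 - s) * P j ω ^ s := by
          apply Finset.sum_le_sum_of_subset_of_nonneg (Finset.filter_subset _ _)
          intro ω _ _
          exact mul_nonneg (Real.rpow_nonneg (hP0 i ω) _) (Real.rpow_nonneg (hP0 j ω) _)
  -- partition the error event by the value of φ
  have key : ∀ i : Fin r,
      ∑ ω ∈ Finset.univ.filter (fun ω => φ ω ≠ i), P i ω
        = ∑ j, if i = j then 0 else ∑ ω ∈ Finset.univ.filter (fun ω => φ ω = j), P i ω := by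
    intro i
    have h := Finset.sum_fiberwise Finset.univ φ (fun ω => if i = φ ω then 0 else P i ω)
    calc ∑ ω ∈ Finset.univ.filter (fun ω => φ ω ≠ i), P i ω
        = ∑ ω, if i = φ ω then 0 else P i ω := by
          rw [Finset.sum_ite, Finset.sum_const_zero, zero_add]
          apply Finset.sum_congr _ (fun _ _ => rfl)
          ext ω
          simp [eq_comm, Finset.mem_filter]
      _ = ∑ j, ∑ ω ∈ Finset.univ.filter (fun ω => φ ω = j),
            (if i = φ ω then 0 else P i ω) := h.symm
      _ = ∑ j, if i = j then 0 else ∑ ω ∈ Finset.univ.filter (fun ω => φ ω = j), P i ω := by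
          apply Finset.sum_congr rfl
          intro j _
          rcases eq_or_ne i j with hij | hij
          · subst hij
            rw [if_pos rfl]
            apply Finset.sum_eq_zero
            intro ω hω
            rw [if_pos ((Finset.mem_filter.mp hω).2).symm]
          · rw [if_neg hij]
            apply Finset.sum_congr rfl
            intro ω hω
            rw [if_neg]
            rw [(Finset.mem_filter.mp hω).2]
            exact hij
  apply Finset.sum_le_sum
  intro i _
  rw [key i]
  apply Finset.sum_le_sum
  intro j _
  rcases eq_or_ne i j with hij | hij
  · simp [hij]
  · simpa [hij] using hfib i j
end

section
/- Let Ω be a finite sample space and P_1, …, P_r pairwise distinct probability distributions on Ω with pairwise affinities inf_{s∈[0,1]} Σ_{ω} P_i(ω)^{1−s} P_j(ω)^s > 0, and define the multiple Chernoff bound ξ_CB(Σ) = min_{i≠j} (−log inf_{s∈[0,1]} Σ_{ω∈Ω} P_i(ω)^{1−s} P_j(ω)^s). For each n let φ_n : Ω^n → {1, …, r} be any maximum-likelihood rule for the n-fold product measures P_1^n, …, P_r^n (i.e. P_{φ_n(x)}^n({x}) = max_k P_k^n({x}) for every x ∈ Ω^n, where P_k^n({x}) = ∏_{m=1}^n P_k(x_m)).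 Then for every real c < ξ_CB(Σ), the average error probability (1/r) Σ_{i=1}^r P_i^n({x : φ_n(x) ≠ i}) ≤ exp(−n c) for all sufficiently large n. -/
noncomputable section

/-- The multiple (classical) Chernoff bound: worst case over distinct pairs. -/
def xiCBmulti {Ω : Type*} [Fintype Ω] {r : ℕ} (P : Fin r → Ω → ℝ) : ℝ :=
  sInf {x | ∃ i j, i ≠ j ∧ x = -Real.log (clAffinity (P i) (P j))}

end

private lemma aux_rpow_split (p q s : ℝ) (hp : 0 ≤ p) (hpq : p ≤ q)
    (hs : s ∈ Set.Icc (0:ℝ) 1) : p ≤ p ^ (1 - s) * q ^ s := by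
  obtain ⟨hs0, hs1⟩ := hs
  calc p = p ^ ((1 - s) + s) := by rw [sub_add_cancel, Real.rpow_one]
    _ = p ^ (1 - s) * p ^ s := Real.rpow_add' hp (by norm_num)
    _ ≤ p ^ (1 - s) * q ^ s :=
      mul_le_mul_of_nonneg_left (Real.rpow_le_rpow hp hpq hs0)
        (Real.rpow_nonneg hp _)

/-- multiple classical Chernoff bound, attainability by
maximum likelihood: for any sequence of ML rules for the product measures
and any `c < ξ_CB(Σ)`, the average error is at most `exp(-nc)` eventually. -/
theorem ml_rule_achieves_multiple_chernoff_bound {Ω : Type*} [Fintype Ω]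
    {r : ℕ} (hr : 2 ≤ r)
    (P : Fin r → Ω → ℝ)
    (hP0 : ∀ i ω, 0 ≤ P i ω) (hP1 : ∀ i, ∑ ω, P i ω = 1)
    (hdist : ∀ i j, i ≠ j → P i ≠ P j)
    (haff : ∀ i j, i ≠ j → 0 < clAffinity (P i) (P j))
    (φ : (n : ℕ) → (Fin n → Ω) → Fin r)
    (hML : ∀ n (x : Fin n → Ω) (k : Fin r),
      ∏ m, P k (x m) ≤ ∏ m, P (φ n x) (x m))
    (c : ℝ) (hc : c < xiCBmulti P) :
    ∃ N : ℕ, ∀ n ≥ N,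
      (1 / (r : ℝ)) *
          ∑ i, ∑ x ∈ Finset.univ.filter (fun x : Fin n → Ω => φ n x ≠ i),
            ∏ m, P i (x m) ≤
        Real.exp (-(n : ℝ) * c) := by
  classical
  set D := Real.exp (-c) with hD
  have hDpos : 0 < D := Real.exp_pos _
  -- every pairwise Chernoff exponent exceeds c
  have hpair : ∀ i j : Fin r, i ≠ j → clAffinity (P i) (P j) < D := by
    intro i j hij
    have hmem : -Real.log (clAffinity (P i) (P j)) ∈
        {x | ∃ i j, i ≠ j ∧ x = -Real.log (clAffinity (P i) (P j))} :=
      ⟨i, j, hij, rfl⟩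
    have hbdd : BddBelow {x | ∃ i j : Fin r, i ≠ j ∧
        x = -Real.log (clAffinity (P i) (P j))} := by
      have : {x | ∃ i j : Fin r, i ≠ j ∧
          x = -Real.log (clAffinity (P i) (P j))} ⊆
          (fun p : Fin r × Fin r => -Real.log (clAffinity (P p.1) (P p.2))) ''
            Set.univ := by
        rintro x ⟨i, j, -, rfl⟩; exact ⟨(i, j), trivial, rfl⟩
      exact ((Set.finite_univ.image _).subset this).bddBelow
    have h1 : c < -Real.log (clAffinity (P i) (P j)) :=
      lt_of_lt_of_le hc (csInf_le hbdd hmem)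
    have : Real.log (clAffinity (P i) (P j)) < -c := by linarith
    calc clAffinity (P i) (P j)
        = Real.exp (Real.log (clAffinity (P i) (P j))) :=
          (Real.exp_log (haff i j hij)).symm
      _ < D := Real.exp_lt_exp.2 this
  -- choose a good exponent s for every pair
  have key : ∀ i j : Fin r, ∃ s ∈ Set.Icc (0:ℝ) 1,
      i ≠ j → ∑ ω, P i ω ^ (1 - s) * P j ω ^ s < D := by
    intro i j
    by_cases hij : i ≠ j
    · have hne : ((fun s : ℝ => ∑ ω, P i ω ^ (1 - s) * P j ω ^ s) ''
          Set.Icc 0 1).Nonempty :=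
        (Set.nonempty_Icc.2 zero_le_one).image _
      have hbdd : BddBelow ((fun s : ℝ => ∑ ω, P i ω ^ (1 - s) * P j ω ^ s) ''
          Set.Icc 0 1) := by
        refine ⟨0, ?_⟩
        rintro x ⟨s, -, rfl⟩
        exact Finset.sum_nonneg fun ω _ =>
          mul_nonneg (Real.rpow_nonneg (hP0 i ω) _) (Real.rpow_nonneg (hP0 j ω) _)
      have := (csInf_lt_iff hbdd hne).1 (hpair i j hij)
      obtain ⟨x, ⟨s, hs, rfl⟩, hx⟩ := this
      exact ⟨s, hs, fun _ => hx⟩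
    · exact ⟨0, Set.mem_Icc.2 ⟨le_rfl, zero_le_one⟩, fun h => absurd h hij⟩
  choose s hsIcc hslt using key
  set θ : Fin r → Fin r → ℝ :=
    fun i j => ∑ ω, P i ω ^ (1 - s i j) * P j ω ^ (s i j) with hθ
  have hθ0 : ∀ i j, 0 ≤ θ i j := fun i j =>
    Finset.sum_nonneg fun ω _ =>
      mul_nonneg (Real.rpow_nonneg (hP0 i ω) _) (Real.rpow_nonneg (hP0 j ω) _)
  -- the geometric sum tends to 0
  have htend : Filter.Tendsto
      (fun n : ℕ => ∑ i : Fin r, ∑ j ∈ Finset.univ.erase i, (θ i j / D) ^ n)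
      Filter.atTop (nhds 0) := by
    have h0 : (0:ℝ) = ∑ i : Fin r, ∑ j ∈ Finset.univ.erase i, (0:ℝ) := by simp
    rw [h0]
    refine tendsto_finset_sum _ fun i _ => ?_
    refine tendsto_finset_sum _ fun j hj => ?_
    have hij : i ≠ j := (Finset.ne_of_mem_erase hj).symm
    refine tendsto_pow_atTop_nhds_zero_of_lt_one
      (div_nonneg (hθ0 i j) hDpos.le) ?_
    rw [div_lt_one hDpos]
    exact hslt i j hij
  have hrpos : (0:ℝ) < r := by positivity
  obtain ⟨N, hN⟩ := (Filter.eventually_atTop).1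
    (htend.eventually (eventually_le_nhds hrpos))
  refine ⟨N, fun n hn => ?_⟩
  -- per-hypothesis error bound
  have herr : ∀ i : Fin r,
      ∑ x ∈ Finset.univ.filter (fun x : Fin n → Ω => φ n x ≠ i),
        ∏ m, P i (x m) ≤ ∑ j ∈ Finset.univ.erase i, θ i j ^ n := by
    intro i
    have step1 : ∀ x ∈ Finset.univ.filter (fun x : Fin n → Ω => φ n x ≠ i),
        ∏ m, P i (x m) ≤ ∑ j ∈ Finset.univ.erase i,
          ∏ m, P i (x m) ^ (1 - s i j) * P j (x m) ^ (s i j) := by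
      intro x hx
      have hxne : φ n x ≠ i := (Finset.mem_filter.1 hx).2
      set j0 := φ n x with hj0
      have hj0mem : j0 ∈ Finset.univ.erase i :=
        Finset.mem_erase.2 ⟨hxne, Finset.mem_univ _⟩
      have hsplit : ∀ j : Fin r, ∏ m, P i (x m) ^ (1 - s i j) * P j (x m) ^ (s i j)
          = (∏ m, P i (x m)) ^ (1 - s i j) * (∏ m, P j (x m)) ^ (s i j) := by
        intro j
        rw [Finset.prod_mul_distrib,
          ← Real.finset_prod_rpow _ _ (fun m _ => hP0 i (x m)),
          ← Real.finset_prod_rpow _ _ (fun m _ => hP0 j (x m))]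
      have hP : ∏ m, P i (x m) ≤
          ∏ m, P i (x m) ^ (1 - s i j0) * P j0 (x m) ^ (s i j0) := by
        rw [hsplit j0]
        exact aux_rpow_split _ _ _ (Finset.prod_nonneg fun m _ => hP0 i (x m))
          (hML n x i) (hsIcc i j0)
      refine hP.trans (Finset.single_le_sum (f := fun j => ∏ m, P i (x m) ^ (1 - s i j) * P j (x m) ^ (s i j)) (fun j _ => ?_) hj0mem)
      exact Finset.prod_nonneg fun m _ =>
        mul_nonneg (Real.rpow_nonneg (hP0 i (x m)) _) (Real.rpow_nonneg (hP0 j (x m)) _)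
    calc ∑ x ∈ Finset.univ.filter (fun x : Fin n → Ω => φ n x ≠ i),
          ∏ m, P i (x m)
        ≤ ∑ x ∈ Finset.univ.filter (fun x : Fin n → Ω => φ n x ≠ i),
            ∑ j ∈ Finset.univ.erase i,
              ∏ m, P i (x m) ^ (1 - s i j) * P j (x m) ^ (s i j) :=
          Finset.sum_le_sum step1
      _ ≤ ∑ x : Fin n → Ω, ∑ j ∈ Finset.univ.erase i,
            ∏ m, P i (x m) ^ (1 - s i j) * P j (x m) ^ (s i j) := by
          refine Finset.sum_le_sum_of_subset_of_nonneg
            (Finset.filter_subset _ _) (fun x _ _ => ?_)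
          exact Finset.sum_nonneg fun j _ => Finset.prod_nonneg fun m _ =>
            mul_nonneg (Real.rpow_nonneg (hP0 i (x m)) _)
              (Real.rpow_nonneg (hP0 j (x m)) _)
      _ = ∑ j ∈ Finset.univ.erase i, ∑ x : Fin n → Ω,
            ∏ m, P i (x m) ^ (1 - s i j) * P j (x m) ^ (s i j) :=
          Finset.sum_comm
      _ = ∑ j ∈ Finset.univ.erase i, θ i j ^ n := by
          refine Finset.sum_congr rfl fun j _ => ?_
          rw [hθ]
          exact (Fintype.sum_pow (fun ω => P i ω ^ (1 - s i j) * P j ω ^ (s i j)) n).symm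
  -- combine
  have hsum : ∑ i : Fin r,
      ∑ x ∈ Finset.univ.filter (fun x : Fin n → Ω => φ n x ≠ i),
        ∏ m, P i (x m) ≤ r * D ^ n := by
    calc ∑ i : Fin r, ∑ x ∈ Finset.univ.filter (fun x : Fin n → Ω => φ n x ≠ i),
          ∏ m, P i (x m)
        ≤ ∑ i : Fin r, ∑ j ∈ Finset.univ.erase i, θ i j ^ n :=
          Finset.sum_le_sum fun i _ => herr i
      _ = (∑ i : Fin r, ∑ j ∈ Finset.univ.erase i, (θ i j / D) ^ n) * D ^ n := by
          rw [Finset.sum_mul]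
          refine Finset.sum_congr rfl fun i _ => ?_
          rw [Finset.sum_mul]
          refine Finset.sum_congr rfl fun j _ => ?_
          rw [div_pow, div_mul_cancel₀]
          positivity
      _ ≤ r * D ^ n :=
          mul_le_mul_of_nonneg_right (hN n hn) (by positivity)
  have hfinal : Real.exp (-(n:ℝ) * c) = D ^ n := by
    rw [hD, ← Real.exp_nat_mul]
    ring_nf
  rw [hfinal]
  rw [div_mul_eq_mul_div, one_mul, div_le_iff₀ hrpos]
  calc ∑ i : Fin r, ∑ x ∈ Finset.univ.filter (fun x : Fin n → Ω => φ n x ≠ i),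
        ∏ m, P i (x m) ≤ r * D ^ n := hsum
    _ = D ^ n * r := by ring
end

section
/- Let ρ_1, …, ρ_r be density matrices on ℂ^d satisfying Condition (LI): range(ρ_i) ∩ range(ρ_j) = {0} for all i ≠ j. Then for all sufficiently large n, the subspaces range(ρ_1^{⊗n}), …, range(ρ_r^{⊗n}) of ℂ^{d^n} are linearly independent as a family, i.e. their sum is a direct sum (equivalently, if x_i ∈ range(ρ_i^{⊗n}) for each i and Σ_i x_i = 0, then all x_i = 0). -/
open Matrix Filter
open scoped ComplexOrder

noncomputable section

/-- A density matrix: positive semidefinite with trace 1. -/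
def IsDensity {d : ℕ} (ρ : Matrix (Fin d) (Fin d) ℂ) : Prop :=
  ρ.PosSemidef ∧ ρ.trace = 1

/-- Real power of a Hermitian matrix via the spectral decomposition
(convention `(0:ℝ) ^ (0:ℝ) = 1`, as for `Real.rpow`). Returns `0` on
non-Hermitian input. -/
def mpow {ι : Type*} [Fintype ι] [DecidableEq ι] (ρ : Matrix ι ι ℂ) (s : ℝ) :
    Matrix ι ι ℂ :=
  if hρ : ρ.IsHermitian then
    (hρ.eigenvectorUnitary : Matrix ι ι ℂ) *
      Matrix.diagonal (fun i => ((hρ.eigenvalues i ^ s : ℝ) : ℂ)) *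
      star (hρ.eigenvectorUnitary : Matrix ι ι ℂ)
  else 0

/-- `inf_{s ∈ [0,1]} tr(ρ^{1-s} σ^s)`. -/
def qcbAffinity {d : ℕ} (ρ σ : Matrix (Fin d) (Fin d) ℂ) : ℝ :=
  sInf ((fun s : ℝ => (mpow ρ (1 - s) * mpow σ s).trace.re) '' Set.Icc 0 1)

/-- The binary quantum Chernoff bound. -/
def xiQCB {d : ℕ} (ρ σ : Matrix (Fin d) (Fin d) ℂ) : ℝ :=
  -Real.log (qcbAffinity ρ σ)

/-- The multiple quantum Chernoff bound: worst case over distinct pairs. -/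
def xiQCBmulti {d r : ℕ} (ρ : Fin r → Matrix (Fin d) (Fin d) ℂ) : ℝ :=
  sInf {x | ∃ i j, i ≠ j ∧ x = xiQCB (ρ i) (ρ j)}

/-- The `n`-fold Kronecker (tensor) power of a matrix. -/
def tensorPow {d m : ℕ} (A : Matrix (Fin d) (Fin m) ℂ) (n : ℕ) :
    Matrix (Fin n → Fin d) (Fin n → Fin m) ℂ :=
  fun x y => ∏ k, A (x k) (y k)

/-- A POVM (quantum detector) with `r` outcomes. -/
def IsPOVM {ι : Type*} [Fintype ι] [DecidableEq ι] {r : ℕ}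
    (E : Fin r → Matrix ι ι ℂ) : Prop :=
  (∀ i, (E i).PosSemidef) ∧ ∑ i, E i = 1

end

/-- The column space (support) of a matrix. -/
noncomputable def matRange {m k : Type*} [Fintype k] (A : Matrix m k ℂ) :
    Submodule ℂ (m → ℂ) :=
  LinearMap.range A.mulVecLin

/-!
Let `P i` be the orthogonal projection onto `range (ρ i)`. For `i ≠ j` the ranges meet trivially,
so `‖P i * P j‖ < 1`: the operator norm is attained on the compact unit sphere, and
`‖P i (P j v)‖ = ‖v‖` forces `v ∈ range (ρ i) ⊓ range (ρ j)`. The tensor power `(P i)^{⊗n}` fixes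
`range (ρ i)^{⊗n}` and `‖(P i * P j)^{⊗n}‖ ≤ ‖P i * P j‖ ^ n`, so vectors `x i` taken from the
ranges of different tensor powers are almost orthogonal:
`‖⟪x i, x j⟫‖ ≤ ‖P i * P j‖ ^ n * ‖x i‖ * ‖x j‖`. Once these bounds sum to less than `1`, taking
the inner product of `∑ i, x i = 0` with the longest `x i` shows that it vanishes.
-/

open scoped Matrix.Norms.L2Operator InnerProductSpace

section TensorPow

variable {d m e : ℕ}

theorem tensorPow_mul (A : Matrix (Fin d) (Fin m) ℂ) (B : Matrix (Fin m) (Fin e) ℂ) (n : ℕ) :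
    tensorPow A n * tensorPow B n = tensorPow (A * B) n := by
  ext x z
  simp only [tensorPow, mul_apply, Finset.prod_univ_sum, Fintype.piFinset_univ,
    Finset.prod_mul_distrib]

theorem tensorPow_diagonal (f : Fin d → ℂ) (n : ℕ) :
    tensorPow (diagonal f) n = diagonal fun x => ∏ k, f (x k) := by
  ext x y
  by_cases h : x = y
  · simp [tensorPow, h]
  · obtain ⟨k, hk⟩ := Function.ne_iff.mp h
    simpa [tensorPow, diagonal_apply, h] using
      Finset.prod_eq_zero (Finset.mem_univ k) (by simp [hk])

theorem tensorPow_one (n : ℕ) : tensorPow (1 : Matrix (Fin d) (Fin d) ℂ) n = 1 := by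
  simpa using tensorPow_diagonal (fun _ : Fin d => (1 : ℂ)) n

theorem tensorPow_conjTranspose (A : Matrix (Fin d) (Fin m) ℂ) (n : ℕ) :
    (tensorPow A n)ᴴ = tensorPow Aᴴ n := by
  ext x y
  simp [tensorPow, conjTranspose_apply]

theorem isHermitian_tensorPow {A : Matrix (Fin d) (Fin d) ℂ} (hA : A.IsHermitian) (n : ℕ) :
    (tensorPow A n).IsHermitian := by
  rw [IsHermitian, tensorPow_conjTranspose, hA.eq]

theorem tensorPow_mem_unitaryGroup {U : Matrix (Fin d) (Fin d) ℂ} (hU : U ∈ unitaryGroup (Fin d) ℂ)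
    (n : ℕ) : tensorPow U n ∈ unitaryGroup (Fin n → Fin d) ℂ := by
  rw [mem_unitaryGroup_iff, star_eq_conjTranspose, tensorPow_conjTranspose, tensorPow_mul,
    ← star_eq_conjTranspose, mem_unitaryGroup_iff.mp hU, tensorPow_one]

theorem norm_tensorPow_diagonal_le (f : Fin d → ℂ) (n : ℕ) :
    ‖tensorPow (diagonal f) n‖ ≤ ‖diagonal f‖ ^ n := by
  rw [tensorPow_diagonal, l2_opNorm_diagonal, l2_opNorm_diagonal,
    pi_norm_le_iff_of_nonneg (by positivity)]
  intro x
  rw [norm_prod]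
  calc ∏ k, ‖f (x k)‖ ≤ ∏ _k : Fin n, ‖f‖ :=
        Finset.prod_le_prod (fun _ _ => norm_nonneg _) fun k _ => norm_le_pi_norm f (x k)
    _ = ‖f‖ ^ n := by simp

theorem norm_tensorPow_le_of_isHermitian {A : Matrix (Fin d) (Fin d) ℂ} (hA : A.IsHermitian)
    (n : ℕ) : ‖tensorPow A n‖ ≤ ‖A‖ ^ n := by
  set U := hA.eigenvectorUnitary
  set D : Matrix (Fin d) (Fin d) ℂ := diagonal (RCLike.ofReal ∘ hA.eigenvalues)
  have hAUD : A = U * D * star (U : Matrix (Fin d) (Fin d) ℂ) := hA.spectral_theorem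
  have hUn : tensorPow (U : Matrix (Fin d) (Fin d) ℂ) n ∈ unitaryGroup _ ℂ :=
    tensorPow_mem_unitaryGroup U.2 n
  have hD : ‖D‖ = ‖A‖ := by
    rw [hAUD, CStarRing.norm_mul_mem_unitary _ (Unitary.star_mem U.2),
      CStarRing.norm_mem_unitary_mul _ U.2]
  calc ‖tensorPow A n‖
      = ‖tensorPow (U : Matrix (Fin d) (Fin d) ℂ) n * tensorPow D n *
          star (tensorPow (U : Matrix (Fin d) (Fin d) ℂ) n)‖ := by
        rw [star_eq_conjTranspose, tensorPow_conjTranspose, tensorPow_mul, tensorPow_mul,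
          ← star_eq_conjTranspose, ← hAUD]
    _ = ‖tensorPow D n‖ := by
        rw [CStarRing.norm_mul_mem_unitary _ (Unitary.star_mem hUn),
          CStarRing.norm_mem_unitary_mul _ hUn]
    _ ≤ ‖A‖ ^ n := hD ▸ norm_tensorPow_diagonal_le _ n

theorem norm_tensorPow_le (A : Matrix (Fin d) (Fin d) ℂ) (n : ℕ) :
    ‖tensorPow A n‖ ≤ ‖A‖ ^ n := by
  have h := norm_tensorPow_le_of_isHermitian (isHermitian_conjTranspose_mul_self A) n
  rw [← tensorPow_mul, ← tensorPow_conjTranspose, l2_opNorm_conjTranspose_mul_self,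
    l2_opNorm_conjTranspose_mul_self, ← sq, ← sq, ← pow_mul, mul_comm, pow_mul] at h
  exact (pow_le_pow_iff_left₀ (norm_nonneg _) (by positivity) two_ne_zero).mp h

end TensorPow

section InnerProductSpace

variable {𝕜 E : Type*} [RCLike 𝕜] [NormedAddCommGroup E] [InnerProductSpace 𝕜 E]

theorem norm_starProjection_mul_starProjection_lt_one [FiniteDimensional 𝕜 E]
    {K L : Submodule 𝕜 E} (hKL : K ⊓ L = ⊥) :
    ‖K.starProjection * L.starProjection‖ < 1 := by
  set T := K.starProjection * L.starProjection
  have hcontract : ∀ v ∈ Metric.sphere (0 : E) 1, ‖T v‖ < 1 := by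
    intro v hv
    rw [mem_sphere_zero_iff_norm] at hv
    have hL := L.norm_starProjection_apply_le v
    have hK := K.norm_starProjection_apply_le (L.starProjection v)
    refine lt_of_le_of_ne (hv ▸ hK.trans hL) fun hT => ?_
    change ‖K.starProjection (L.starProjection v)‖ = 1 at hT
    have hvL : v ∈ L := (L.mem_iff_norm_starProjection v).mpr (by linarith)
    have hvK : v ∈ K := by
      rw [← L.starProjection_eq_self_iff.mpr hvL]
      exact (K.mem_iff_norm_starProjection _).mpr (by linarith)
    have : v = 0 := by simpa [hKL] using Submodule.mem_inf.mpr ⟨hvK, hvL⟩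
    simp [this] at hv
  have := FiniteDimensional.proper_rclike 𝕜 E
  rcases (Metric.sphere (0 : E) 1).eq_empty_or_nonempty with hempty | hne
  · refine (ContinuousLinearMap.opNorm_le_of_unit_norm le_rfl fun x hx => ?_).trans_lt one_pos
    exact (Set.eq_empty_iff_forall_notMem.mp hempty x (mem_sphere_zero_iff_norm.mpr hx)).elim
  · obtain ⟨v, hv, hmax⟩ := (isCompact_sphere (0 : E) 1).exists_isMaxOn hne
      (T.continuous.norm.continuousOn)
    exact lt_of_le_of_lt (ContinuousLinearMap.opNorm_le_of_unit_norm (norm_nonneg _)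
      fun x hx => hmax (mem_sphere_zero_iff_norm.mpr hx)) (hcontract v hv)

theorem eq_zero_of_sum_eq_zero_of_norm_inner_le {ι : Type*} [Fintype ι] [DecidableEq ι]
    {x : ι → E} {ε : ι → ι → ℝ} (hε : ∀ i j, 0 ≤ ε i j)
    (hsmall : ∀ i, ∑ j ∈ Finset.univ.erase i, ε i j < 1)
    (hinner : ∀ i j, i ≠ j → ‖⟪x i, x j⟫_𝕜‖ ≤ ε i j * (‖x i‖ * ‖x j‖))
    (hsum : ∑ i, x i = 0) (i : ι) : x i = 0 := by
  obtain ⟨i₀, -, hmax⟩ := Finset.exists_max_image Finset.univ (fun j => ‖x j‖) ⟨i, by simp⟩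
  suffices ‖x i₀‖ = 0 from
    norm_eq_zero.mp (le_antisymm (this ▸ hmax i (Finset.mem_univ i)) (norm_nonneg _))
  have hself : ⟪x i₀, x i₀⟫_𝕜 = -∑ j ∈ Finset.univ.erase i₀, ⟪x i₀, x j⟫_𝕜 := by
    rw [eq_neg_iff_add_eq_zero, ← inner_sum, ← inner_add_right,
      Finset.add_sum_erase _ _ (Finset.mem_univ i₀), hsum, inner_zero_right]
  have hbound : ‖x i₀‖ ^ 2 ≤ (∑ j ∈ Finset.univ.erase i₀, ε i₀ j) * ‖x i₀‖ ^ 2 := calc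
    ‖x i₀‖ ^ 2 = ‖⟪x i₀, x i₀⟫_𝕜‖ := by
      rw [inner_self_eq_norm_sq_to_K, norm_pow, RCLike.norm_ofReal, abs_norm]
    _ ≤ ∑ j ∈ Finset.univ.erase i₀, ‖⟪x i₀, x j⟫_𝕜‖ := by
      rw [hself, norm_neg]
      exact norm_sum_le _ _
    _ ≤ ∑ j ∈ Finset.univ.erase i₀, ε i₀ j * ‖x i₀‖ ^ 2 := by
      refine Finset.sum_le_sum fun j hj => (hinner i₀ j (Finset.ne_of_mem_erase hj).symm).trans ?_
      rw [sq]
      exact mul_le_mul_of_nonneg_left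
        (mul_le_mul_of_nonneg_left (hmax j (Finset.mem_univ j)) (norm_nonneg _)) (hε i₀ j)
    _ = (∑ j ∈ Finset.univ.erase i₀, ε i₀ j) * ‖x i₀‖ ^ 2 := (Finset.sum_mul ..).symm
  by_contra hne
  have hpos : 0 < ‖x i₀‖ ^ 2 := pow_pos (lt_of_le_of_ne (norm_nonneg _) (Ne.symm hne)) 2
  exact hbound.not_gt ((mul_lt_iff_lt_one_left hpos).mpr (hsmall i₀))

theorem norm_inner_le_of_isSymmetric_of_apply_eq {p q : E →L[𝕜] E}
    (hp : (p : E →ₗ[𝕜] E).IsSymmetric) {u w : E} (hu : p u = u) (hw : q w = w) :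
    ‖⟪u, w⟫_𝕜‖ ≤ ‖p * q‖ * (‖u‖ * ‖w‖) :=
  calc ‖⟪u, w⟫_𝕜‖
    _ = ‖⟪u, p (q w)⟫_𝕜‖ := by rw [hw, ← ContinuousLinearMap.coe_coe, ← hp]; simp [hu]
    _ ≤ ‖u‖ * (‖p * q‖ * ‖w‖) := by
      grw [norm_inner_le_norm, ← mul_apply_eq_comp, ContinuousLinearMap.le_opNorm]
    _ = ‖p * q‖ * (‖u‖ * ‖w‖) := by ring

end InnerProductSpace

section RangeProj

variable {m k : Type*} [Fintype m] [DecidableEq m] [Fintype k]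

noncomputable def rangeProj (A : Matrix m k ℂ) : Matrix m m ℂ :=
  (toEuclideanCLM (n := m) (𝕜 := ℂ)).symm
    ((matRange A).comap (WithLp.linearEquiv 2 ℂ (m → ℂ)).toLinearMap).starProjection

theorem isHermitian_rangeProj (A : Matrix m k ℂ) : (rangeProj A).IsHermitian := by
  rw [← isSymmetric_toEuclideanLin_iff, ← coe_toEuclideanCLM_eq_toEuclideanLin, rangeProj,
    StarAlgEquiv.apply_symm_apply]
  exact Submodule.starProjection_isSymmetric _

theorem rangeProj_mul_self (A : Matrix m k ℂ) : rangeProj A * A = A := by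
  refine mulVec_injective (funext fun v => ?_)
  have hmem : WithLp.toLp 2 (A *ᵥ v) ∈
      (matRange A).comap (WithLp.linearEquiv 2 ℂ (m → ℂ)).toLinearMap := ⟨v, rfl⟩
  rw [← mulVec_mulVec, ← WithLp.ofLp_toLp 2 (A *ᵥ v), ← ofLp_toEuclideanCLM, rangeProj,
    StarAlgEquiv.apply_symm_apply, Submodule.starProjection_eq_self_iff.mpr hmem]

theorem norm_rangeProj_mul_rangeProj_lt_one {A B : Matrix m k ℂ}
    (h : matRange A ⊓ matRange B = ⊥) : ‖rangeProj A * rangeProj B‖ < 1 := by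
  rw [← l2_opNorm_toEuclideanCLM, map_mul, rangeProj, rangeProj, StarAlgEquiv.apply_symm_apply,
    StarAlgEquiv.apply_symm_apply]
  refine norm_starProjection_mul_starProjection_lt_one ?_
  rw [← Submodule.comap_inf, h, Submodule.comap_bot, LinearEquiv.ker]

end RangeProj

section TensorPowRange

variable {d m e : ℕ}

theorem toEuclideanCLM_tensorPow_rangeProj_of_mem {A : Matrix (Fin d) (Fin m) ℂ} {n : ℕ}
    {x : (Fin n → Fin d) → ℂ} (hx : x ∈ matRange (tensorPow A n)) :
    toEuclideanCLM (n := Fin n → Fin d) (𝕜 := ℂ) (tensorPow (rangeProj A) n) (WithLp.toLp 2 x) =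
      WithLp.toLp 2 x := by
  obtain ⟨u, rfl⟩ := hx
  rw [toEuclideanCLM_toLp, mulVecLin_apply, mulVec_mulVec, tensorPow_mul, rangeProj_mul_self]

theorem norm_inner_le_of_mem_matRange_tensorPow {A : Matrix (Fin d) (Fin m) ℂ}
    {B : Matrix (Fin d) (Fin e) ℂ} {n : ℕ} {x y : (Fin n → Fin d) → ℂ}
    (hx : x ∈ matRange (tensorPow A n)) (hy : y ∈ matRange (tensorPow B n)) :
    ‖⟪WithLp.toLp 2 x, WithLp.toLp 2 y⟫_ℂ‖ ≤
      ‖rangeProj A * rangeProj B‖ ^ n * (‖WithLp.toLp 2 x‖ * ‖WithLp.toLp 2 y‖) := by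
  have hsymm : (toEuclideanCLM (n := Fin n → Fin d) (𝕜 := ℂ) (tensorPow (rangeProj A) n) :
      EuclideanSpace ℂ (Fin n → Fin d) →ₗ[ℂ] _).IsSymmetric := by
    rw [coe_toEuclideanCLM_eq_toEuclideanLin, isSymmetric_toEuclideanLin_iff]
    exact isHermitian_tensorPow (isHermitian_rangeProj A) n
  refine (norm_inner_le_of_isSymmetric_of_apply_eq hsymm
    (toEuclideanCLM_tensorPow_rangeProj_of_mem hx)
    (toEuclideanCLM_tensorPow_rangeProj_of_mem hy)).trans ?_
  rw [← map_mul, l2_opNorm_toEuclideanCLM, tensorPow_mul]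
  gcongr
  exact norm_tensorPow_le _ n

end TensorPowRange

theorem tensor_pow_ranges_independent_general {d r : ℕ}
    (ρ : Fin r → Matrix (Fin d) (Fin d) ℂ)
    (hLI : ∀ i j, i ≠ j → matRange (ρ i) ⊓ matRange (ρ j) = ⊥) :
    ∃ N : ℕ, ∀ n ≥ N,
      ∀ x : Fin r → ((Fin n → Fin d) → ℂ),
        (∀ i, x i ∈ matRange (tensorPow (ρ i) n)) →
        (∑ i, x i = 0) →
        ∀ i, x i = 0 := by
  have hdecay : ∀ᶠ n in atTop, ∀ i,
      ∑ j ∈ Finset.univ.erase i, ‖rangeProj (ρ i) * rangeProj (ρ j)‖ ^ n < 1 := by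
    refine eventually_all.mpr fun i => ?_
    have hlim : Tendsto (fun n => ∑ j ∈ Finset.univ.erase i,
        ‖rangeProj (ρ i) * rangeProj (ρ j)‖ ^ n) atTop (nhds 0) := by
      simpa only [Finset.sum_const_zero] using tendsto_finsetSum _ fun j hj =>
        tendsto_pow_atTop_nhds_zero_of_lt_one (norm_nonneg _)
          (norm_rangeProj_mul_rangeProj_lt_one (hLI i j (Finset.ne_of_mem_erase hj).symm))
    exact hlim.eventually_lt_const one_pos
  obtain ⟨N, hN⟩ := eventually_atTop.mp hdecay
  refine ⟨N, fun n hn x hx hsum i => ?_⟩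
  have := eq_zero_of_sum_eq_zero_of_norm_inner_le (x := fun i => WithLp.toLp 2 (x i))
    (fun _ _ => by positivity) (hN n hn)
    (fun i j _ => norm_inner_le_of_mem_matRange_tensorPow (hx i) (hx j))
    (by rw [← WithLp.toLp_sum, hsum]; rfl) i
  simpa using this

/-- if the supports of the density matrices intersect
pairwise trivially, then for all sufficiently large `n` the supports of the
tensor powers `ρ_i^{⊗n}` form a linearly independent family of subspaces
(their sum is direct). -/
theorem tensor_pow_ranges_independent {d r : ℕ}
    (ρ : Fin r → Matrix (Fin d) (Fin d) ℂ)
    (hρ : ∀ i, IsDensity (ρ i))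
    (hLI : ∀ i j, i ≠ j → matRange (ρ i) ⊓ matRange (ρ j) = ⊥) :
    ∃ N : ℕ, ∀ n ≥ N,
      ∀ x : Fin r → ((Fin n → Fin d) → ℂ),
        (∀ i, x i ∈ matRange (tensorPow (ρ i) n)) →
        (∑ i, x i = 0) →
        ∀ i, x i = 0 :=
  tensor_pow_ranges_independent_general ρ hLI
end

section
/- Let ρ = Σ_{j} λ_j |u_j⟩⟨u_j| and σ = Σ_{j} μ_j |w_j⟩⟨w_j| be density matrices on ℂ^D given by spectral decompositions with orthonormal eigenvector families (u_j) and (w_j). Let ε ∈ (0,1), δ = (1 − ε²)^{1/2}, and let (f_j) and (g_j) be two orthonormal families in ℂ^D such that every f_j and every g_j is orthogonal to all u_k, all w_k, and to each other (⟨f_j, g_k⟩ = 0 for all j,k). Define ũ_j = δ u_j + ε f_j and w̃_j = δ w_j + ε g_j, and the density matrices ρ̃ = Σ_j λ_j |ũ_j⟩⟨ũ_j| and σ̃ = Σ_j μ_j |w̃_j⟩⟨w̃_j|. Then for every s ∈ (0,1), tr(ρ̃^{1−s} σ̃^s) = δ⁴ · tr(ρ^{1−s} σ^s). -/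
open Matrix Filter
open scoped ComplexOrder

/-! Since `δ² + ε² = 1` and the new directions `f_j`, `g_j` are orthogonal to everything else,
the perturbed families `ũ`, `w̃` are again orthonormal. So the sums defining `ρ̃` and `σ̃` are
spectral decompositions, `ρ̃^{1-s} = Σ_j λ_j^{1-s} |ũ_j⟩⟨ũ_j|` and `σ̃^s = Σ_k μ_k^s |w̃_k⟩⟨w̃_k|`,
whence `tr(ρ̃^{1-s} σ̃^s) = Σ_{j,k} λ_j^{1-s} μ_k^s |⟨ũ_j, w̃_k⟩|²`. By the same orthogonality,
`⟨ũ_j, w̃_k⟩ = δ² ⟨u_j, w_k⟩`. -/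

open Polynomial

theorem aeval_mul_eq_smul_of_mul_eq_smul {R A : Type*} [CommSemiring R] [Semiring A]
    [Algebra R A] {a p : A} {c : R} (h : a * p = c • p) (q : R[X]) :
    aeval a q * p = q.eval c • p := by
  induction q using Polynomial.induction_on with
  | C r => simp [Algebra.smul_def]
  | add q₁ q₂ h₁ h₂ => simp only [map_add, add_mul, h₁, h₂, eval_add, add_smul]
  | monomial n r ih =>
    rw [pow_succ, ← mul_assoc, map_mul, aeval_X, mul_assoc, h, mul_smul_comm, ih, smul_smul,
      eval_mul_X, mul_comm]

section SpectralSum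

variable {𝕜 ι n : Type*} [RCLike 𝕜] [Fintype ι] [Fintype n]

theorem isHermitian_sum_smul_vecMulVec (v : ι → n → 𝕜) (c : ι → ℝ) :
    (∑ j, (c j : 𝕜) • vecMulVec (v j) (star (v j))).IsHermitian :=
  isSelfAdjoint_sum _ fun j _ =>
    (posSemidef_vecMulVec_self_star (v j)).isHermitian.smul (.algebraMap 𝕜 (.all (c j)))

variable [DecidableEq ι] {v : ι → n → 𝕜}

theorem sum_smul_vecMulVec_mul_of_orthonormal
    (hv : ∀ j k, star (v j) ⬝ᵥ v k = if j = k then 1 else 0) (c : ι → 𝕜) (k : ι) :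
    (∑ j, c j • vecMulVec (v j) (star (v j))) * vecMulVec (v k) (star (v k)) =
      c k • vecMulVec (v k) (star (v k)) := by
  simp [Finset.sum_mul, vecMulVec_mul_vecMulVec, hv, apply_ite]

variable [DecidableEq n]

theorem aeval_sum_smul_vecMulVec_of_orthonormal
    (hv : ∀ j k, star (v j) ⬝ᵥ v k = if j = k then 1 else 0)
    (c : ι → ℝ) {q : ℝ[X]} (hq : q.coeff 0 = 0) :
    aeval (∑ j, (c j : 𝕜) • vecMulVec (v j) (star (v j))) q =
      ∑ j, ((q.eval (c j) : ℝ) : 𝕜) • vecMulVec (v j) (star (v j)) := by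
  obtain ⟨q, rfl⟩ := X_dvd_iff.mpr hq
  rw [mul_comm, map_mul, aeval_X, Finset.mul_sum]
  refine Finset.sum_congr rfl fun j _ => ?_
  have hj : (∑ i, (c i : 𝕜) • vecMulVec (v i) (star (v i))) * vecMulVec (v j) (star (v j)) =
      c j • vecMulVec (v j) (star (v j)) := by
    rw [RCLike.real_smul_eq_coe_smul (K := 𝕜)]
    exact sum_smul_vecMulVec_mul_of_orthonormal hv _ j
  rw [mul_smul_comm, aeval_mul_eq_smul_of_mul_eq_smul hj, RCLike.real_smul_eq_coe_smul (K := 𝕜),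
    smul_smul, eval_mul_X, RCLike.ofReal_mul, mul_comm]

theorem cfc_sum_smul_vecMulVec_of_orthonormal
    (hv : ∀ j k, star (v j) ⬝ᵥ v k = if j = k then 1 else 0)
    (c : ι → ℝ) {φ : ℝ → ℝ} (hφ : φ 0 = 0) :
    cfc φ (∑ j, (c j : 𝕜) • vecMulVec (v j) (star (v j))) =
      ∑ j, (φ (c j) : 𝕜) • vecMulVec (v j) (star (v j)) := by
  set A := ∑ j, (c j : 𝕜) • vecMulVec (v j) (star (v j))
  have hA : A.IsHermitian := isHermitian_sum_smul_vecMulVec v c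
  -- a polynomial vanishing at `0` that agrees with `φ` on the spectrum of `A` and on the weights
  set S : Finset ℝ := insert 0 (Finset.univ.image hA.eigenvalues ∪ Finset.univ.image c)
  set p := Lagrange.interpolate S id φ
  have hp : ∀ x ∈ S, p.eval x = φ x := fun x hx =>
    Lagrange.eval_interpolate_at_node φ (Set.injOn_id _) hx
  have hspec : ∀ x ∈ spectrum ℝ A, x ∈ S := fun x hx => by
    obtain ⟨i, rfl⟩ := hA.spectrum_real_eq_range_eigenvalues ▸ hx
    simp [S]
  calc cfc φ A = cfc p.eval A := cfc_congr fun x hx => (hp x (hspec x hx)).symm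
    _ = aeval A p := cfc_polynomial p A
    _ = ∑ j, ((p.eval (c j) : ℝ) : 𝕜) • vecMulVec (v j) (star (v j)) :=
      aeval_sum_smul_vecMulVec_of_orthonormal hv c
        (by rw [coeff_zero_eq_eval_zero, hp 0 (Finset.mem_insert_self _ _), hφ])
    _ = _ := by simp only [hp _ (by simp [S] : c _ ∈ S)]

end SpectralSum

theorem mpow_eq_cfc {ι : Type*} [Fintype ι] [DecidableEq ι] {A : Matrix ι ι ℂ}
    (hA : A.IsHermitian) (r : ℝ) : mpow A r = cfc (fun x : ℝ => x ^ r) A := by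
  rw [mpow, dif_pos hA, hA.cfc_eq, IsHermitian.cfc, Unitary.conjStarAlgAut_apply]
  rfl

theorem mpow_sum_smul_vecMulVec_of_orthonormal {ι n : Type*} [Fintype ι] [DecidableEq ι]
    [Fintype n] [DecidableEq n] {v : ι → n → ℂ}
    (hv : ∀ j k, star (v j) ⬝ᵥ v k = if j = k then 1 else 0) (c : ι → ℝ) {r : ℝ} (hr : r ≠ 0) :
    mpow (∑ j, (c j : ℂ) • vecMulVec (v j) (star (v j))) r =
      ∑ j, ((c j ^ r : ℝ) : ℂ) • vecMulVec (v j) (star (v j)) :=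
  (mpow_eq_cfc (isHermitian_sum_smul_vecMulVec v c) r).trans
    (cfc_sum_smul_vecMulVec_of_orthonormal hv c (Real.zero_rpow hr))

theorem trace_sum_smul_vecMulVec_mul_sum_smul_vecMulVec {𝕜 ι κ n : Type*} [RCLike 𝕜]
    [Fintype ι] [Fintype κ] [Fintype n] (a : ι → 𝕜) (b : κ → 𝕜) (x : ι → n → 𝕜)
    (y : κ → n → 𝕜) :
    trace ((∑ j, a j • vecMulVec (x j) (star (x j))) * ∑ k, b k • vecMulVec (y k) (star (y k))) =
      ∑ j, ∑ k, a j * b k * ((star (x j) ⬝ᵥ y k) * star (star (x j) ⬝ᵥ y k)) := by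
  simp only [Finset.sum_mul_sum, trace_sum, smul_mul_assoc, mul_smul_comm, trace_smul,
    vecMulVec_mul_vecMulVec, trace_vecMulVec, dotProduct_smul, ← star_dotProduct, smul_eq_mul]
  refine Finset.sum_congr rfl fun j _ => Finset.sum_congr rfl fun k _ => ?_
  rw [dotProduct_comm (x j)]
  ring

section Perturbation

variable {𝕜 ι n : Type*} [RCLike 𝕜] [Fintype n]

theorem star_smul_add_smul_dotProduct_smul_add_smul (α β : ℝ) (a b x y : n → 𝕜) :
    star ((α : 𝕜) • a + (β : 𝕜) • b) ⬝ᵥ ((α : 𝕜) • x + (β : 𝕜) • y) =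
      α * α * (star a ⬝ᵥ x) + α * β * (star a ⬝ᵥ y) + β * α * (star b ⬝ᵥ x) +
        β * β * (star b ⬝ᵥ y) := by
  simp only [star_add, star_smul, add_dotProduct, dotProduct_add, smul_dotProduct,
    dotProduct_smul, RCLike.star_def, RCLike.conj_ofReal, smul_eq_mul]
  ring

theorem orthonormal_smul_add_smul [DecidableEq ι] {u f : ι → n → 𝕜}
    (hu : ∀ j k, star (u j) ⬝ᵥ u k = if j = k then 1 else 0)
    (hf : ∀ j k, star (f j) ⬝ᵥ f k = if j = k then 1 else 0)
    (hfu : ∀ j k, star (f j) ⬝ᵥ u k = 0) {α β : ℝ} (hαβ : α ^ 2 + β ^ 2 = 1) (j k : ι) :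
    star ((α : 𝕜) • u j + (β : 𝕜) • f j) ⬝ᵥ ((α : 𝕜) • u k + (β : 𝕜) • f k) =
      if j = k then 1 else 0 := by
  have hαβ' : (α : 𝕜) * α + β * β = 1 := by exact_mod_cast (by linear_combination hαβ)
  rw [star_smul_add_smul_dotProduct_smul_add_smul, hu, hf, hfu, star_dotProduct, hfu]
  split_ifs <;> simp [hαβ']

theorem star_smul_add_smul_dotProduct_smul_add_smul_of_orthogonal {u f w g : n → 𝕜}
    (hgu : star g ⬝ᵥ u = 0) (hfw : star f ⬝ᵥ w = 0) (hfg : star f ⬝ᵥ g = 0) (α β : ℝ) :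
    star ((α : 𝕜) • u + (β : 𝕜) • f) ⬝ᵥ ((α : 𝕜) • w + (β : 𝕜) • g) =
      (α * α : ℝ) * (star u ⬝ᵥ w) := by
  rw [star_smul_add_smul_dotProduct_smul_add_smul, star_dotProduct u g, hgu, star_zero, hfw, hfg]
  push_cast
  ring

end Perturbation

theorem perturbed_chernoff_trace_general {D m : ℕ}
    (u w f g : Fin m → (Fin D → ℂ))
    (lam mu : Fin m → ℝ)
    (huON : ∀ j k, star (u j) ⬝ᵥ u k = if j = k then 1 else 0)
    (hwON : ∀ j k, star (w j) ⬝ᵥ w k = if j = k then 1 else 0)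
    (hfON : ∀ j k, star (f j) ⬝ᵥ f k = if j = k then 1 else 0)
    (hgON : ∀ j k, star (g j) ⬝ᵥ g k = if j = k then 1 else 0)
    (hfu : ∀ j k, star (f j) ⬝ᵥ u k = 0)
    (hfw : ∀ j k, star (f j) ⬝ᵥ w k = 0)
    (hgu : ∀ j k, star (g j) ⬝ᵥ u k = 0)
    (hgw : ∀ j k, star (g j) ⬝ᵥ w k = 0)
    (hfg : ∀ j k, star (f j) ⬝ᵥ g k = 0)
    (ε δ : ℝ) (hε : ε ∈ Set.Ioo (0 : ℝ) 1) (hδ : δ = Real.sqrt (1 - ε ^ 2))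
    (ρ σ ρt σt : Matrix (Fin D) (Fin D) ℂ)
    (hρ : ρ = ∑ j, (lam j : ℂ) • Matrix.vecMulVec (u j) (star (u j)))
    (hσ : σ = ∑ j, (mu j : ℂ) • Matrix.vecMulVec (w j) (star (w j)))
    (hρt : ρt = ∑ j, (lam j : ℂ) •
      Matrix.vecMulVec ((δ : ℂ) • u j + (ε : ℂ) • f j)
        (star ((δ : ℂ) • u j + (ε : ℂ) • f j)))
    (hσt : σt = ∑ j, (mu j : ℂ) •
      Matrix.vecMulVec ((δ : ℂ) • w j + (ε : ℂ) • g j)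
        (star ((δ : ℂ) • w j + (ε : ℂ) • g j)))
    (s : ℝ) (hs : s ∈ Set.Ioo (0 : ℝ) 1) :
    (mpow ρt (1 - s) * mpow σt s).trace =
      ((δ ^ 4 : ℝ) : ℂ) * (mpow ρ (1 - s) * mpow σ s).trace := by
  have hδε : δ ^ 2 + ε ^ 2 = 1 := by
    rw [hδ, Real.sq_sqrt (by nlinarith [hε.1, hε.2])]
    ring
  have hut : ∀ j k, star ((δ : ℂ) • u j + (ε : ℂ) • f j) ⬝ᵥ ((δ : ℂ) • u k + (ε : ℂ) • f k) =
      if j = k then 1 else 0 := orthonormal_smul_add_smul huON hfON hfu hδε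
  have hwt : ∀ j k, star ((δ : ℂ) • w j + (ε : ℂ) • g j) ⬝ᵥ ((δ : ℂ) • w k + (ε : ℂ) • g k) =
      if j = k then 1 else 0 := orthonormal_smul_add_smul hwON hgON hgw hδε
  have hs₁ : 1 - s ≠ 0 := (sub_pos.2 hs.2).ne'
  subst hρ hσ hρt hσt
  rw [mpow_sum_smul_vecMulVec_of_orthonormal hut lam hs₁,
    mpow_sum_smul_vecMulVec_of_orthonormal hwt mu hs.1.ne',
    mpow_sum_smul_vecMulVec_of_orthonormal huON lam hs₁,
    mpow_sum_smul_vecMulVec_of_orthonormal hwON mu hs.1.ne',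
    trace_sum_smul_vecMulVec_mul_sum_smul_vecMulVec,
    trace_sum_smul_vecMulVec_mul_sum_smul_vecMulVec]
  simp only [Finset.mul_sum]
  refine Finset.sum_congr rfl fun j _ => Finset.sum_congr rfl fun k _ => ?_
  have hcross : star ((δ : ℂ) • u j + (ε : ℂ) • f j) ⬝ᵥ ((δ : ℂ) • w k + (ε : ℂ) • g k) =
      (δ * δ : ℝ) * (star (u j) ⬝ᵥ w k) :=
    star_smul_add_smul_dotProduct_smul_add_smul_of_orthogonal (hgu k j) (hfw j k) (hfg j k) δ ε
  rw [hcross, star_mul', Complex.star_def, Complex.conj_ofReal]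
  push_cast
  ring

/-- trace invariance under the ε-perturbation:
perturbing the eigenvectors of `ρ` and `σ` into fresh orthogonal directions,
`ũ_j = δ u_j + ε f_j` and `w̃_j = δ w_j + ε g_j` with `δ = (1-ε²)^{1/2}`,
rescales the Chernoff trace quantity by `δ⁴`. -/
theorem perturbed_chernoff_trace {D m : ℕ}
    (u w f g : Fin m → (Fin D → ℂ))
    (lam mu : Fin m → ℝ)
    (hlam0 : ∀ j, 0 ≤ lam j) (hlam1 : ∑ j, lam j = 1)
    (hmu0 : ∀ j, 0 ≤ mu j) (hmu1 : ∑ j, mu j = 1)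
    (huON : ∀ j k, star (u j) ⬝ᵥ u k = if j = k then 1 else 0)
    (hwON : ∀ j k, star (w j) ⬝ᵥ w k = if j = k then 1 else 0)
    (hfON : ∀ j k, star (f j) ⬝ᵥ f k = if j = k then 1 else 0)
    (hgON : ∀ j k, star (g j) ⬝ᵥ g k = if j = k then 1 else 0)
    (hfu : ∀ j k, star (f j) ⬝ᵥ u k = 0)
    (hfw : ∀ j k, star (f j) ⬝ᵥ w k = 0)
    (hgu : ∀ j k, star (g j) ⬝ᵥ u k = 0)
    (hgw : ∀ j k, star (g j) ⬝ᵥ w k = 0)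
    (hfg : ∀ j k, star (f j) ⬝ᵥ g k = 0)
    (ε δ : ℝ) (hε : ε ∈ Set.Ioo (0 : ℝ) 1) (hδ : δ = Real.sqrt (1 - ε ^ 2))
    (ρ σ ρt σt : Matrix (Fin D) (Fin D) ℂ)
    (hρ : ρ = ∑ j, (lam j : ℂ) • Matrix.vecMulVec (u j) (star (u j)))
    (hσ : σ = ∑ j, (mu j : ℂ) • Matrix.vecMulVec (w j) (star (w j)))
    (hρt : ρt = ∑ j, (lam j : ℂ) •
      Matrix.vecMulVec ((δ : ℂ) • u j + (ε : ℂ) • f j)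
        (star ((δ : ℂ) • u j + (ε : ℂ) • f j)))
    (hσt : σt = ∑ j, (mu j : ℂ) •
      Matrix.vecMulVec ((δ : ℂ) • w j + (ε : ℂ) • g j)
        (star ((δ : ℂ) • w j + (ε : ℂ) • g j)))
    (s : ℝ) (hs : s ∈ Set.Ioo (0 : ℝ) 1) :
    (mpow ρt (1 - s) * mpow σt s).trace =
      ((δ ^ 4 : ℝ) : ℂ) * (mpow ρ (1 - s) * mpow σ s).trace :=
  perturbed_chernoff_trace_general u w f g lam mu huON hwON hfON hgON hfu hfw hgu hgw hfg ε δ hε hδ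
    ρ σ ρt σt hρ hσ hρt hσt s hs
end
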